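/- arXiv:1801.01412 — 3 statements merged into one kernel-verified Lean document; each statement's English description precedes it below -/
import Mathlib

section
/- Fix a completely positive map T : Mat_n(ℂ) → Mat_m(ℂ). The function f(p, q) = e^{H(p)} · cap(T, diag(p), diag(q)), defined on pairs of nonincreasing nonnegative vectors p ∈ ℝ^n, q ∈ ℝ^m, is log-concave: for all such pairs (p, q), (p′, q′) and all λ ∈ [0,1], f(λp + (1−λ)p′, λq + (1−λ)q′) ≥ f(p, q)^λ · f(p′, q′)^{1−λ}. -/
open Matrix BigOperators

noncomputable section

/-- `η_j` : the projection onto the first `j` coordinates, as a `j × k` matrix. -/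
def proj (j k : ℕ) : Matrix (Fin j) (Fin k) ℂ :=
  Matrix.of fun i l => if (i : ℕ) = (l : ℕ) then 1 else 0

/-- `Δa_j = a_j − a_{j+1}`, with the convention `a_{k+1} = 0`. -/
def delta {k : ℕ} (a : Fin k → ℝ) (j : Fin k) : ℝ :=
  a j - (if h : (j : ℕ) + 1 < k then a ⟨(j : ℕ) + 1, h⟩ else 0)

/-- Integer version of `delta`. -/
def deltaNat {k : ℕ} (a : Fin k → ℕ) (j : Fin k) : ℕ :=
  a j - (if h : (j : ℕ) + 1 < k then a ⟨(j : ℕ) + 1, h⟩ else 0)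

/-- The relative determinant `det(diag a, X) = ∏_j det(η_j X η_j†)^{Δa_j}` (real exponents,
with the convention `0 ^ 0 = 1`). -/
def relDet {k : ℕ} (a : Fin k → ℝ) (X : Matrix (Fin k) (Fin k) ℂ) : ℝ :=
  ∏ j : Fin k,
    ((proj ((j : ℕ) + 1) k * X * (proj ((j : ℕ) + 1) k)ᴴ).det.re) ^ (delta a j)

/-- Complex relative determinant for integral weights. -/
def relDetC {k : ℕ} (a : Fin k → ℕ) (X : Matrix (Fin k) (Fin k) ℂ) : ℂ :=
  ∏ j : Fin k,
    ((proj ((j : ℕ) + 1) k * X * (proj ((j : ℕ) + 1) k)ᴴ).det) ^ (deltaNat a j)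

/-- The completely positive map `T(X) = Σ A_i X A_i†` with Kraus operators `A i`. -/
def cpMap {ι κ : Type*} [Fintype ι] {r : ℕ} (A : Fin r → Matrix κ ι ℂ)
    (X : Matrix ι ι ℂ) : Matrix κ κ ℂ :=
  ∑ i, A i * X * (A i)ᴴ

/-- The dual completely positive map `T*(Y) = Σ A_i† Y A_i`. -/
def cpDual {ι κ : Type*} [Fintype κ] {r : ℕ} (A : Fin r → Matrix κ ι ℂ)
    (Y : Matrix κ κ ℂ) : Matrix ι ι ℂ :=
  ∑ i, (A i)ᴴ * Y * A i

/-- Frobenius norm `‖A‖ = √(Tr A Aᴴ)`. -/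
def frob {ι κ : Type*} [Fintype ι] [Fintype κ] (A : Matrix ι κ ℂ) : ℝ :=
  Real.sqrt (A * Aᴴ).trace.re

/-- Upper triangular predicate. -/
def UT {k : ℕ} (g : Matrix (Fin k) (Fin k) ℂ) : Prop :=
  ∀ i j : Fin k, j < i → g i j = 0

/-- Capacity with specified marginals:
`cap(T,P,Q) = inf over invertible upper triangular h of det(Q, T(hPh†)) / det(P, h†h)`. -/
def cap {n m r : ℕ} (A : Fin r → Matrix (Fin m) (Fin n) ℂ)
    (p : Fin n → ℝ) (q : Fin m → ℝ) : ℝ :=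
  sInf { x : ℝ | ∃ h : Matrix (Fin n) (Fin n) ℂ, IsUnit h.det ∧ UT h ∧
    x = relDet q (cpMap A (h * Matrix.diagonal (fun j => (p j : ℂ)) * hᴴ)) /
        relDet p (hᴴ * h) }

/-- Span of the first `i` standard basis vectors of `ℂ^k`. -/
def coordSub (k i : ℕ) : Submodule ℂ (Fin k → ℂ) where
  carrier := { x | ∀ l : Fin k, i ≤ (l : ℕ) → x l = 0 }
  add_mem' := by intro a b ha hb l hl; simp [ha l hl, hb l hl]
  zero_mem' := by intro l _; rfl
  smul_mem' := by intro c x hx l hl; simp [hx l hl]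

/-- `(L, R)` is a `T`-independent pair: `A_i R ⊥ L` for all `i`. -/
def TIndep {n m r : ℕ} (A : Fin r → Matrix (Fin m) (Fin n) ℂ)
    (L : Submodule ℂ (Fin m → ℂ)) (R : Submodule ℂ (Fin n → ℂ)) : Prop :=
  ∀ i : Fin r, ∀ x ∈ R, ∀ y ∈ L, star y ⬝ᵥ (A i).mulVec x = 0

/-- `(P,Q)`-rank-nondecreasingness. -/
def rankNonDec {n m r : ℕ} (A : Fin r → Matrix (Fin m) (Fin n) ℂ)
    (p : Fin n → ℝ) (q : Fin m → ℝ) : Prop :=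
  ∀ L : Submodule ℂ (Fin m → ℂ), ∀ R : Submodule ℂ (Fin n → ℂ), TIndep A L R →
    (∑ i : Fin m, delta q i * (Module.finrank ℂ ↥(coordSub m ((i : ℕ) + 1) ⊓ L) : ℝ)) +
      (∑ j : Fin n, delta p j * (Module.finrank ℂ ↥(coordSub n ((j : ℕ) + 1) ⊓ R) : ℝ))
      ≤ ∑ j, p j

/-- `λ'_{i+1}`: number of parts of `lam` that are `> i` (0-indexed conjugate partition). -/
def conj' {k : ℕ} (lam : Fin k → ℕ) (i : ℕ) : ℕ :=
  (Finset.univ.filter fun j : Fin k => i < lam j).card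

lemma conj'_le {k : ℕ} (lam : Fin k → ℕ) (i : ℕ) : conj' lam i ≤ k := by
  classical
  calc conj' lam i ≤ Finset.univ.card := Finset.card_filter_le _ _
    _ = k := by simp

/-- Index set for the blocks of `G_λ`; it has cardinality `Σ_i λ'_i = Σ_j λ_j`. -/
abbrev lamIdx {k : ℕ} (lam : Fin k → ℕ) : Type :=
  Σ i : Fin (Finset.univ.sup lam), Fin (conj' lam (i : ℕ))

/-- The gadget map `G_λ(X) = ⊕_{i=1}^{λ_1} η_{λ'_i} X η_{λ'_i}†`. -/
def Gmap {k : ℕ} (lam : Fin k → ℕ) (X : Matrix (Fin k) (Fin k) ℂ) :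
    Matrix (lamIdx lam) (lamIdx lam) ℂ := fun s t =>
  if s.1 = t.1 then
    X (Fin.castLE (conj'_le lam (s.1 : ℕ)) s.2) (Fin.castLE (conj'_le lam (t.1 : ℕ)) t.2)
  else 0

/-- The adjoint `G_λ*` of the gadget map with respect to the trace inner product. -/
def GmapAdj {k : ℕ} (lam : Fin k → ℕ) (Y : Matrix (lamIdx lam) (lamIdx lam) ℂ) :
    Matrix (Fin k) (Fin k) ℂ := fun a b =>
  ∑ i : Fin (Finset.univ.sup lam),
    if h : (a : ℕ) < conj' lam (i : ℕ) ∧ (b : ℕ) < conj' lam (i : ℕ) then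
      Y ⟨i, ⟨(a : ℕ), h.1⟩⟩ ⟨i, ⟨(b : ℕ), h.2⟩⟩
    else 0

/-- The reduction `trun_{P,Q} T = G_q ∘ T ∘ G_p*`. -/
def trun {n m r : ℕ} (A : Fin r → Matrix (Fin m) (Fin n) ℂ) (p : Fin n → ℕ) (q : Fin m → ℕ)
    (X : Matrix (lamIdx p) (lamIdx p) ℂ) : Matrix (lamIdx q) (lamIdx q) ℂ :=
  Gmap q (cpMap A (GmapAdj p X))

/-- The dual of the reduction: `(trun_{P,Q} T)* = G_p ∘ T* ∘ G_q*`. -/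
def trunDual {n m r : ℕ} (A : Fin r → Matrix (Fin m) (Fin n) ℂ) (p : Fin n → ℕ) (q : Fin m → ℕ)
    (Y : Matrix (lamIdx q) (lamIdx q) ℂ) : Matrix (lamIdx p) (lamIdx p) ℂ :=
  Gmap p (cpDual A (GmapAdj q Y))

/-- Shannon entropy with convention `0 · log 0 = 0` (note `Real.log 0 = 0`). -/
def entropy {k : ℕ} (p : Fin k → ℝ) : ℝ := -∑ j, p j * Real.log (p j)

/-- The distance-to-target measure `ds_{P,Q}(T)`. -/
def ds {n m r : ℕ} (A : Fin r → Matrix (Fin m) (Fin n) ℂ)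
    (p : Fin n → ℝ) (q : Fin m → ℝ) : ℝ :=
  (∑ j : Fin n, delta p j *
      (frob (proj ((j : ℕ) + 1) n *
        (cpDual A (Matrix.diagonal fun i => (q i : ℂ)) - 1) * (proj ((j : ℕ) + 1) n)ᴴ)) ^ 2) +
    ∑ i : Fin m, delta q i *
      (frob (proj ((i : ℕ) + 1) m *
        (cpMap A (Matrix.diagonal fun j => (p j : ℂ)) - 1) * (proj ((i : ℕ) + 1) m)ᴴ)) ^ 2

/-- `(u_1,…,u_n)` can be approximately put in `Q`-isotropic position with respect to `p`. -/
def approxIso {m n : ℕ} (u : Fin n → Fin m → ℂ) (p : Fin n → ℝ)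
    (Q : Matrix (Fin m) (Fin m) ℂ) : Prop :=
  ∀ ε : ℝ, 0 < ε → ∃ B : Matrix (Fin m) (Fin m) ℂ, IsUnit B.det ∧
    frob ((∑ i : Fin n,
      (((p i / ∑ a, Complex.normSq (B.mulVec (u i) a)) : ℝ) : ℂ) •
        Matrix.vecMulVec (B.mulVec (u i)) (star (B.mulVec (u i)))) - Q) ≤ ε


/-! Fix an invertible upper-triangular `h` and a nonnegative vector `x`. Substituting
`h · diag(d)`, where `d_l² p_l = x_l` on the support of `p`, into the infimum defining the
capacity, and using that `det(Q, ·)` is monotone in the Loewner order, gives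
`e^{H(p)} cap(T, P, Q) · det(P, h†h) · ∏ x_l^{p_l} ≤ det(Q, T(h X h†))`.
Every factor of this bound is a fixed nonnegative number raised to an exponent linear in `(p, q)`.
For `x = λp + (1-λ)p'` the weighted geometric mean of the bounds at `(p, q)` and `(p', q')` turns
`∏ x_l^{p_l}` and `∏ x_l^{p'_l}` into `∏ x_l^{x_l} = e^{-H(x)}`, so that
`f(p, q)^λ f(p', q')^{1-λ} ≤ e^{H(x)} det(λQ + (1-λ)Q', T(h X h†)) / det(X, h†h)` for every `h`;
it remains to take the infimum over `h`. -/

section LogConcavity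

open Finset Matrix
open scoped ComplexOrder

section Delta

variable {k : ℕ}

lemma delta_nonneg_of_antitone {a : Fin k → ℝ} (ha : Antitone a) (ha0 : ∀ j, 0 ≤ a j)
    (j : Fin k) : 0 ≤ delta a j := by
  unfold delta
  split_ifs with h
  · exact sub_nonneg.mpr (ha (Fin.mk_le_mk.mpr (Nat.le_succ j)))
  · simpa using ha0 j

lemma delta_mul_add_mul (a b : Fin k → ℝ) (t s : ℝ) (j : Fin k) :
    delta (fun l => t * a l + s * b l) j = t * delta a j + s * delta b j := by
  unfold delta
  split_ifs <;> ring

lemma sum_Ici_delta (a : Fin k → ℝ) (i : Fin k) : ∑ j ∈ Ici i, delta a j = a i := by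
  set A : ℕ → ℝ := fun t => if h : t < k then a ⟨t, h⟩ else 0
  have hA : ∀ j : Fin k, delta a j = A j - A (j + 1) := fun j => by simp [delta, A, j.2]
  calc ∑ j ∈ Ici i, delta a j = ∑ t ∈ (Ici i).map Fin.valEmbedding, (A t - A (t + 1)) := by
        rw [sum_map]
        simp only [Fin.valEmbedding_apply, hA]
    _ = A i - A k := by
        rw [Fin.map_valEmbedding_Ici, ← neg_sub, ← sum_Ico_sub _ i.2.le, ← sum_neg_distrib]
        simp only [neg_sub]
    _ = a i := by simp [A]

lemma prod_Iic_rpow_delta (a : Fin k → ℝ) {w : Fin k → ℝ} (hw : ∀ i, 0 < w i) :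
    ∏ j, (∏ i ∈ Iic j, w i) ^ delta a j = ∏ i, w i ^ a i := by
  calc ∏ j, (∏ i ∈ Iic j, w i) ^ delta a j = ∏ j, ∏ i ∈ Iic j, w i ^ delta a j := by
        simp_rw [← Real.finsetProd_rpow _ _ fun i _ => (hw i).le]
    _ = ∏ i, ∏ j ∈ Ici i, w i ^ delta a j :=
        prod_comm' fun j i => by simp
    _ = ∏ i, w i ^ a i := by
        simp_rw [← Real.rpow_sum_of_pos (hw _), sum_Ici_delta]

end Delta

lemma prod_castLE_eq_prod_Iic {k : ℕ} {M : Type*} [CommMonoid M] (f : Fin k → M) (j : Fin k) :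
    ∏ i : Fin (j + 1), f (Fin.castLE j.2 i) = ∏ i ∈ Iic j, f i := by
  have : (univ : Finset (Fin (j + 1))).map (Fin.castLEEmb j.2) = Iic j := by
    ext i
    simp only [mem_map, mem_univ, true_and, mem_Iic, Fin.castLEEmb_apply]
    refine ⟨?_, fun hi => ⟨⟨i, Nat.lt_succ_of_le hi⟩, rfl⟩⟩
    rintro ⟨i, rfl⟩
    exact Nat.le_of_lt_succ i.2
  rw [← this, prod_map]
  rfl

lemma prod_rpow_mul_add_mul {ι : Type*} [Fintype ι] {c a b : ι → ℝ} (hc : ∀ i, 0 ≤ c i)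
    (ha : ∀ i, 0 ≤ a i) (hb : ∀ i, 0 ≤ b i) {t s : ℝ} (ht : 0 ≤ t) (hs : 0 ≤ s) :
    ∏ i, c i ^ (t * a i + s * b i) = (∏ i, c i ^ a i) ^ t * (∏ i, c i ^ b i) ^ s := by
  rw [← Real.finsetProd_rpow _ _ fun i _ => Real.rpow_nonneg (hc i) _,
    ← Real.finsetProd_rpow _ _ fun i _ => Real.rpow_nonneg (hc i) _, ← prod_mul_distrib]
  refine prod_congr rfl fun i _ => ?_
  rw [Real.rpow_add_of_nonneg (hc i) (mul_nonneg ht (ha i)) (mul_nonneg hs (hb i)), mul_comm t,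
    mul_comm s, Real.rpow_mul (hc i), Real.rpow_mul (hc i)]

lemma exp_neg_entropy {k : ℕ} {x : Fin k → ℝ} (hx : ∀ l, 0 ≤ x l) :
    Real.exp (-entropy x) = ∏ l, x l ^ x l := by
  rw [entropy, neg_neg, Real.exp_sum]
  refine prod_congr rfl fun l _ => ?_
  rcases (hx l).eq_or_lt with h0 | hpos
  · simp [← h0]
  · rw [Real.rpow_def_of_pos hpos, mul_comm]

lemma exists_pos_sq_mul_le_and_prod_rpow_eq {k : ℕ} {p x : Fin k → ℝ} (hp : ∀ l, 0 ≤ p l)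
    (hx : ∀ l, 0 ≤ x l) (hsupp : ∀ l, 0 < p l → x l ≠ 0) :
    ∃ d : Fin k → ℝ, (∀ l, 0 < d l) ∧ (∀ l, d l ^ 2 * p l ≤ x l) ∧
      ∏ l, x l ^ p l = (∏ l, (d l ^ 2) ^ p l) * ∏ l, p l ^ p l := by
  set d : Fin k → ℝ := fun l => if p l = 0 then 1 else Real.sqrt (x l / p l)
  have hd2 : ∀ l, p l ≠ 0 → d l ^ 2 * p l = x l := fun l hpl => by
    simp only [d, if_neg hpl]
    rw [Real.sq_sqrt (div_nonneg (hx l) (hp l)), div_mul_cancel₀ _ hpl]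
  refine ⟨d, fun l => ?_, fun l => ?_, ?_⟩
  · by_cases hpl : p l = 0
    · simp [d, hpl]
    · have hpl' := (hp l).lt_of_ne' hpl
      simpa [d, hpl] using div_pos ((hx l).lt_of_ne' (hsupp l hpl')) hpl'
  · by_cases hpl : p l = 0
    · simpa [hpl] using hx l
    · exact (hd2 l hpl).le
  · rw [← prod_mul_distrib]
    refine prod_congr rfl fun l _ => ?_
    by_cases hpl : p l = 0
    · simp [hpl]
    · rw [← Real.mul_rpow (sq_nonneg _) (hp l), hd2 l hpl]

section PositiveSemidefinite

variable {𝕜 α : Type*} [RCLike 𝕜] [Fintype α] [DecidableEq α]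

open scoped MatrixOrder

lemma Matrix.PosSemidef.one_le_det_one_add {K : Matrix α α 𝕜} (hK : K.PosSemidef) :
    1 ≤ (1 + K).det := by
  have hH : (1 + K).IsHermitian := (PosDef.one.add_posSemidef hK).isHermitian
  have h1 : (1 : Matrix α α 𝕜) ≤ 1 + K := le_add_of_nonneg_right hK.nonneg
  rw [CFC.one_le_iff (R := ℝ) (1 + K) hH.isSelfAdjoint] at h1
  have : 1 ≤ ∏ i, hH.eigenvalues i :=
    one_le_prod fun i _ => h1 _ (hH.eigenvalues_mem_spectrum_real i)
  rw [hH.det_eq_prod_eigenvalues, ← RCLike.ofReal_prod, ← RCLike.ofReal_one]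
  exact RCLike.ofReal_le_ofReal.mpr this

lemma Matrix.PosSemidef.det_le_det_add {M P : Matrix α α 𝕜} (hM : M.PosSemidef)
    (hP : P.PosSemidef) : M.det ≤ (M + P).det := by
  by_cases hdet : M.det = 0
  · rw [hdet]
    exact (hM.add hP).det_nonneg
  set S := CFC.sqrt M
  have hSS : S * S = M := CFC.sqrt_mul_sqrt_self M hM.nonneg
  have hSu : IsUnit S.det :=
    isUnit_iff_ne_zero.mpr fun h => hdet (by rw [← hSS, det_mul, h, zero_mul])
  have hK : (S⁻¹ * P * S⁻¹).PosSemidef := by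
    have hSinv : S⁻¹ᴴ = S⁻¹ := by
      rw [conjTranspose_nonsing_inv, (CFC.sqrt_nonneg M).posSemidef.1.eq]
    simpa only [hSinv] using hP.mul_mul_conjTranspose_same S⁻¹
  have hMP : M + P = S * (1 + S⁻¹ * P * S⁻¹) * S := by
    rw [Matrix.mul_add, Matrix.add_mul, Matrix.mul_one, hSS]
    simp only [← Matrix.mul_assoc, Matrix.mul_nonsing_inv _ hSu, Matrix.one_mul]
    rw [Matrix.mul_assoc, Matrix.nonsing_inv_mul _ hSu, Matrix.mul_one]
  rw [hMP, det_mul, det_mul, mul_right_comm, ← det_mul, hSS]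
  exact le_mul_of_one_le_right hM.det_nonneg hK.one_le_det_one_add

end PositiveSemidefinite

lemma posSemidef_diagonal_ofReal {k : ℕ} {v : Fin k → ℝ} (hv : ∀ l, 0 ≤ v l) :
    (diagonal fun l => (v l : ℂ)).PosSemidef :=
  PosSemidef.diagonal fun l => Complex.zero_le_real.mpr (hv l)

lemma posDef_conjTranspose_mul_self_of_isUnit_det {k : ℕ} {h : Matrix (Fin k) (Fin k) ℂ}
    (hh : IsUnit h.det) : (hᴴ * h).PosDef :=
  PosDef.conjTranspose_mul_self h
    (mulVec_injective_iff_isUnit.mpr ((isUnit_iff_isUnit_det h).mpr hh))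

section Corner

variable {j k : ℕ}

lemma proj_mul_diagonal (hjk : j ≤ k) (v : Fin k → ℂ) :
    proj j k * diagonal v = diagonal (fun i => v (Fin.castLE hjk i)) * proj j k := by
  ext i l
  by_cases h : (i : ℕ) = l
  · obtain rfl : Fin.castLE hjk i = l := Fin.ext h
    simp [proj]
  · simp [proj, h]

lemma diagonal_mul_conjTranspose_proj (hjk : j ≤ k) (v : Fin k → ℂ) :
    diagonal v * (proj j k)ᴴ = (proj j k)ᴴ * diagonal (fun i => v (Fin.castLE hjk i)) := by
  ext l i
  by_cases h : (i : ℕ) = l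
  · obtain rfl : Fin.castLE hjk i = l := Fin.ext h
    simp [proj]
  · simp [proj, h]

lemma det_proj_diagonal_mul_mul_diagonal (hjk : j ≤ k) (M : Matrix (Fin k) (Fin k) ℂ)
    (v : Fin k → ℂ) :
    (proj j k * (diagonal v * M * diagonal v) * (proj j k)ᴴ).det
      = (∏ i, v (Fin.castLE hjk i)) ^ 2 * (proj j k * M * (proj j k)ᴴ).det := by
  have : proj j k * (diagonal v * M * diagonal v) * (proj j k)ᴴ
      = diagonal (fun i => v (Fin.castLE hjk i)) * (proj j k * M * (proj j k)ᴴ)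
          * diagonal (fun i => v (Fin.castLE hjk i)) := by
    simp only [← Matrix.mul_assoc, proj_mul_diagonal hjk]
    simp only [Matrix.mul_assoc, diagonal_mul_conjTranspose_proj hjk]
  rw [this, det_mul, det_mul, det_diagonal]
  ring

lemma proj_vecMul_injective (hjk : j ≤ k) : Function.Injective (proj j k).vecMul := by
  intro v w hvw
  funext i
  have key : ∀ u : Fin j → ℂ, (u ᵥ* proj j k) (Fin.castLE hjk i) = u i := fun u => by
    simp [vecMul, dotProduct, proj, Fin.val_eq_val]
  rw [← key v, ← key w]
  exact congrFun hvw _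

lemma re_det_proj_mul_mul_nonneg {M : Matrix (Fin k) (Fin k) ℂ} (hM : M.PosSemidef) :
    0 ≤ (proj j k * M * (proj j k)ᴴ).det.re :=
  (Complex.le_def.mp (hM.mul_mul_conjTranspose_same _).det_nonneg).1

lemma re_det_proj_mul_mul_pos (hjk : j ≤ k) {M : Matrix (Fin k) (Fin k) ℂ} (hM : M.PosDef) :
    0 < (proj j k * M * (proj j k)ᴴ).det.re :=
  (Complex.lt_def.mp (hM.mul_mul_conjTranspose_same (proj_vecMul_injective hjk)).det_pos).1

end Corner

section RelDet

variable {k : ℕ}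

lemma relDet_nonneg (a : Fin k → ℝ) {M : Matrix (Fin k) (Fin k) ℂ} (hM : M.PosSemidef) :
    0 ≤ relDet a M :=
  prod_nonneg fun _ _ => Real.rpow_nonneg (re_det_proj_mul_mul_nonneg hM) _

lemma relDet_pos (a : Fin k → ℝ) {M : Matrix (Fin k) (Fin k) ℂ} (hM : M.PosDef) :
    0 < relDet a M :=
  prod_pos fun j _ => Real.rpow_pos_of_pos (re_det_proj_mul_mul_pos j.2 hM) _

lemma relDet_mono {a : Fin k → ℝ} (ha : ∀ j, 0 ≤ delta a j)
    {M N : Matrix (Fin k) (Fin k) ℂ} (hM : M.PosSemidef) (hMN : (N - M).PosSemidef) :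
    relDet a M ≤ relDet a N := by
  refine prod_le_prod (fun _ _ => Real.rpow_nonneg (re_det_proj_mul_mul_nonneg hM) _)
    fun j _ => Real.rpow_le_rpow (re_det_proj_mul_mul_nonneg hM) ?_ (ha j)
  have := (hM.mul_mul_conjTranspose_same (proj (j + 1) k)).det_le_det_add
    (hMN.mul_mul_conjTranspose_same (proj (j + 1) k))
  rw [← Matrix.add_mul, ← Matrix.mul_add, add_sub_cancel] at this
  exact (Complex.le_def.mp this).1

lemma relDet_mul_add_mul {a b : Fin k → ℝ} (ha : ∀ j, 0 ≤ delta a j)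
    (hb : ∀ j, 0 ≤ delta b j) {t s : ℝ} (ht : 0 ≤ t) (hs : 0 ≤ s)
    {M : Matrix (Fin k) (Fin k) ℂ} (hM : M.PosSemidef) :
    relDet (fun l => t * a l + s * b l) M = relDet a M ^ t * relDet b M ^ s := by
  unfold relDet
  simp_rw [delta_mul_add_mul]
  exact prod_rpow_mul_add_mul (fun _ => re_det_proj_mul_mul_nonneg hM) ha hb ht hs

lemma relDet_diagonal_mul_mul_diagonal (a : Fin k → ℝ) {d : Fin k → ℝ}
    (hd : ∀ l, 0 < d l) {M : Matrix (Fin k) (Fin k) ℂ} (hM : M.PosSemidef) :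
    relDet a (diagonal (fun l => (d l : ℂ)) * M * diagonal (fun l => (d l : ℂ)))
      = (∏ l, (d l ^ 2) ^ a l) * relDet a M := by
  unfold relDet
  rw [← prod_Iic_rpow_delta a (fun l => pow_pos (hd l) 2), ← prod_mul_distrib]
  refine prod_congr rfl fun j _ => ?_
  rw [det_proj_diagonal_mul_mul_diagonal j.2, prod_castLE_eq_prod_Iic (fun l => (d l : ℂ)) j,
    ← Complex.ofReal_prod, ← Complex.ofReal_pow, Complex.re_ofReal_mul,
    Real.mul_rpow (sq_nonneg _) (re_det_proj_mul_mul_nonneg hM), prod_pow]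

end RelDet

lemma cpMap_add {ι κ : Type*} [Fintype ι] {r : ℕ} (A : Fin r → Matrix κ ι ℂ)
    (X Y : Matrix ι ι ℂ) : cpMap A (X + Y) = cpMap A X + cpMap A Y := by
  simp only [cpMap, Matrix.mul_add, Matrix.add_mul, sum_add_distrib]

lemma posSemidef_cpMap {ι κ : Type*} [Fintype ι] [Fintype κ] {r : ℕ} (A : Fin r → Matrix κ ι ℂ)
    {X : Matrix ι ι ℂ} (hX : X.PosSemidef) : (cpMap A X).PosSemidef :=
  posSemidef_sum _ fun i _ => hX.mul_mul_conjTranspose_same (A i)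

section Capacity

variable {n m r : ℕ} (A : Fin r → Matrix (Fin m) (Fin n) ℂ)

lemma posSemidef_cpMap_conj_diagonal {x : Fin n → ℝ} (hx : ∀ l, 0 ≤ x l)
    (h : Matrix (Fin n) (Fin n) ℂ) :
    (cpMap A (h * diagonal (fun l => (x l : ℂ)) * hᴴ)).PosSemidef :=
  posSemidef_cpMap A ((posSemidef_diagonal_ofReal hx).mul_mul_conjTranspose_same h)

lemma relDet_cpMap_conj_diagonal_mono {q : Fin m → ℝ} (hq : ∀ i, 0 ≤ delta q i)
    (h : Matrix (Fin n) (Fin n) ℂ) {x y : Fin n → ℝ} (hy : ∀ l, 0 ≤ y l) (hyx : ∀ l, y l ≤ x l) :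
    relDet q (cpMap A (h * diagonal (fun l => (y l : ℂ)) * hᴴ))
      ≤ relDet q (cpMap A (h * diagonal (fun l => (x l : ℂ)) * hᴴ)) := by
  refine relDet_mono hq (posSemidef_cpMap_conj_diagonal A hy h) ?_
  have hxy : diagonal (fun l => (x l : ℂ))
      = diagonal (fun l => (y l : ℂ)) + diagonal (fun l => ((x l - y l : ℝ) : ℂ)) := by
    rw [diagonal_add]
    congr 1
    funext l
    push_cast
    ring
  rw [hxy, Matrix.mul_add, Matrix.add_mul, cpMap_add, add_sub_cancel_left]
  exact posSemidef_cpMap_conj_diagonal A (fun l => sub_nonneg.mpr (hyx l)) h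

def capRatio (p : Fin n → ℝ) (q : Fin m → ℝ) (h : Matrix (Fin n) (Fin n) ℂ) : ℝ :=
  relDet q (cpMap A (h * diagonal (fun j => (p j : ℂ)) * hᴴ)) / relDet p (hᴴ * h)

variable {p : Fin n → ℝ} (q : Fin m → ℝ)

lemma capRatio_nonneg (hp : ∀ j, 0 ≤ p j) (h : Matrix (Fin n) (Fin n) ℂ) :
    0 ≤ capRatio A p q h :=
  div_nonneg (relDet_nonneg q (posSemidef_cpMap_conj_diagonal A hp h))
    (relDet_nonneg p (posSemidef_conjTranspose_mul_self h))

lemma cap_le_capRatio (hp : ∀ j, 0 ≤ p j) {h : Matrix (Fin n) (Fin n) ℂ} (hh : IsUnit h.det)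
    (hut : UT h) : cap A p q ≤ capRatio A p q h := by
  refine csInf_le ⟨0, ?_⟩ ⟨h, hh, hut, rfl⟩
  rintro _ ⟨h, -, -, rfl⟩
  exact capRatio_nonneg A q hp h

lemma le_cap {c : ℝ}
    (hc : ∀ h : Matrix (Fin n) (Fin n) ℂ, IsUnit h.det → UT h → c ≤ capRatio A p q h) :
    c ≤ cap A p q :=
  le_csInf ⟨_, 1, by simp, fun i j hij => one_apply_ne hij.ne', rfl⟩ fun _ ⟨h, hh, hut, hx⟩ =>
    hx ▸ hc h hh hut

lemma cap_nonneg (hp : ∀ j, 0 ≤ p j) : 0 ≤ cap A p q :=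
  le_cap A q fun h _ _ => capRatio_nonneg A q hp h

lemma cap_mul_relDet_le (hp : ∀ j, 0 ≤ p j) {h : Matrix (Fin n) (Fin n) ℂ} (hh : IsUnit h.det)
    (hut : UT h) :
    cap A p q * relDet p (hᴴ * h) ≤ relDet q (cpMap A (h * diagonal (fun j => (p j : ℂ)) * hᴴ)) :=
  (le_div_iff₀ (relDet_pos p (posDef_conjTranspose_mul_self_of_isUnit_det hh))).mp
    (cap_le_capRatio A q hp hh hut)

lemma cap_mul_prod_rpow_mul_relDet_le (hp : ∀ j, 0 ≤ p j) {d : Fin n → ℝ} (hd : ∀ l, 0 < d l)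
    {h : Matrix (Fin n) (Fin n) ℂ} (hh : IsUnit h.det) (hut : UT h) :
    cap A p q * ((∏ l, (d l ^ 2) ^ p l) * relDet p (hᴴ * h))
      ≤ relDet q (cpMap A (h * diagonal (fun l => ((d l ^ 2 * p l : ℝ) : ℂ)) * hᴴ)) := by
  set D : Matrix (Fin n) (Fin n) ℂ := diagonal fun l => (d l : ℂ)
  have hDH : Dᴴ = D := by simp [D, diagonal_conjTranspose]
  have hhD : IsUnit (h * D).det := by
    rw [det_mul, det_diagonal]
    exact hh.mul (isUnit_iff_ne_zero.mpr (prod_ne_zero_iff.mpr fun l _ =>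
      Complex.ofReal_ne_zero.mpr (hd l).ne'))
  have hutD : UT (h * D) := fun i j hij => by simp [D, mul_diagonal, hut i j hij]
  have hgram : (h * D)ᴴ * (h * D) = D * (hᴴ * h) * D := by
    simp only [conjTranspose_mul, hDH, Matrix.mul_assoc]
  have hconj : h * D * diagonal (fun l => (p l : ℂ)) * (h * D)ᴴ
      = h * diagonal (fun l => ((d l ^ 2 * p l : ℝ) : ℂ)) * hᴴ := by
    rw [conjTranspose_mul, hDH, ← Matrix.mul_assoc, Matrix.mul_assoc h, Matrix.mul_assoc h,
      diagonal_mul_diagonal, diagonal_mul_diagonal]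
    congr 3
    funext l
    push_cast
    ring
  rw [← relDet_diagonal_mul_mul_diagonal p hd (posSemidef_conjTranspose_mul_self h), ← hgram,
    ← hconj]
  exact cap_mul_relDet_le A q hp hhD hutD

lemma exp_entropy_mul_cap_mul_le (hp : ∀ l, 0 ≤ p l) (hq : ∀ i, 0 ≤ delta q i)
    {x : Fin n → ℝ} (hx : ∀ l, 0 ≤ x l) {h : Matrix (Fin n) (Fin n) ℂ} (hh : IsUnit h.det)
    (hut : UT h) :
    Real.exp (entropy p) * cap A p q * (relDet p (hᴴ * h) * ∏ l, x l ^ p l)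
      ≤ relDet q (cpMap A (h * diagonal (fun l => (x l : ℂ)) * hᴴ)) := by
  by_cases hsupp : ∃ l, 0 < p l ∧ x l = 0
  · obtain ⟨l, hpl, hxl⟩ := hsupp
    rw [prod_eq_zero (mem_univ l) (by rw [hxl, Real.zero_rpow hpl.ne']), mul_zero, mul_zero]
    exact relDet_nonneg q (posSemidef_cpMap_conj_diagonal A hx h)
  push Not at hsupp
  obtain ⟨d, hd, hdx, hxp⟩ := exists_pos_sq_mul_le_and_prod_rpow_eq hp hx hsupp
  have hHp : Real.exp (entropy p) * ∏ l, p l ^ p l = 1 := by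
    rw [← exp_neg_entropy hp, ← Real.exp_add, add_neg_cancel, Real.exp_zero]
  calc Real.exp (entropy p) * cap A p q * (relDet p (hᴴ * h) * ∏ l, x l ^ p l)
      = cap A p q * ((∏ l, (d l ^ 2) ^ p l) * relDet p (hᴴ * h)) *
          (Real.exp (entropy p) * ∏ l, p l ^ p l) := by
        rw [hxp]
        ring
    _ ≤ relDet q (cpMap A (h * diagonal (fun l => ((d l ^ 2 * p l : ℝ) : ℂ)) * hᴴ)) := by
        rw [hHp, mul_one]
        exact cap_mul_prod_rpow_mul_relDet_le A q hp hd hh hut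
    _ ≤ relDet q (cpMap A (h * diagonal (fun l => (x l : ℂ)) * hᴴ)) :=
        relDet_cpMap_conj_diagonal_mono A hq h (fun l => mul_nonneg (sq_nonneg _) (hp l)) hdx

end Capacity

lemma rpow_mul_rpow_mul_exp_neg_entropy_le_capRatio {n m r : ℕ}
    (A : Fin r → Matrix (Fin m) (Fin n) ℂ) {p p' : Fin n → ℝ} {q q' : Fin m → ℝ}
    (hp : ∀ l, 0 ≤ p l) (hp' : ∀ l, 0 ≤ p' l) (hΔp : ∀ j, 0 ≤ delta p j)
    (hΔp' : ∀ j, 0 ≤ delta p' j) (hΔq : ∀ i, 0 ≤ delta q i) (hΔq' : ∀ i, 0 ≤ delta q' i)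
    {t s : ℝ} (ht : 0 ≤ t) (hs : 0 ≤ s) {h : Matrix (Fin n) (Fin n) ℂ} (hh : IsUnit h.det)
    (hut : UT h) :
    (Real.exp (entropy p) * cap A p q) ^ t * (Real.exp (entropy p') * cap A p' q') ^ s *
        Real.exp (-entropy fun l => t * p l + s * p' l)
      ≤ capRatio A (fun l => t * p l + s * p' l) (fun i => t * q i + s * q' i) h := by
  set x : Fin n → ℝ := fun l => t * p l + s * p' l
  have hx : ∀ l, 0 ≤ x l := fun l => add_nonneg (mul_nonneg ht (hp l)) (mul_nonneg hs (hp' l))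
  have hgram := posDef_conjTranspose_mul_self_of_isUnit_det hh
  have hC := posSemidef_cpMap_conj_diagonal A hx h
  have hxx : ∏ l, x l ^ x l = (∏ l, x l ^ p l) ^ t * (∏ l, x l ^ p' l) ^ s :=
    prod_rpow_mul_add_mul hx hp hp' ht hs
  rw [capRatio, le_div_iff₀ (relDet_pos x hgram), exp_neg_entropy hx, hxx,
    relDet_mul_add_mul hΔp hΔp' ht hs hgram.posSemidef, relDet_mul_add_mul hΔq hΔq' ht hs hC]
  have hF := mul_nonneg (Real.exp_nonneg (entropy p)) (cap_nonneg A q hp)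
  have hF' := mul_nonneg (Real.exp_nonneg (entropy p')) (cap_nonneg A q' hp')
  have hR := relDet_nonneg p hgram.posSemidef
  have hR' := relDet_nonneg p' hgram.posSemidef
  have hX : 0 ≤ ∏ l, x l ^ p l := prod_nonneg fun l _ => Real.rpow_nonneg (hx l) _
  have hX' : 0 ≤ ∏ l, x l ^ p' l := prod_nonneg fun l _ => Real.rpow_nonneg (hx l) _
  have hN := relDet_nonneg q hC
  calc _ = (Real.exp (entropy p) * cap A p q * (relDet p (hᴴ * h) * ∏ l, x l ^ p l)) ^ t *
        (Real.exp (entropy p') * cap A p' q' * (relDet p' (hᴴ * h) * ∏ l, x l ^ p' l)) ^ s := by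
        simp only [Real.mul_rpow, hF, hF', hR, hR', hX, hX', mul_nonneg]
        ring
    _ ≤ _ := by
        gcongr
        exacts [exp_entropy_mul_cap_mul_le A q hp hΔq hx hh hut,
          exp_entropy_mul_cap_mul_le A q' hp' hΔq' hx hh hut]

end LogConcavity

/-- Proposition (log-concavity): `f(p,q) = e^{H(p)} · cap(T, diag p, diag q)` is log-concave on
pairs of nonincreasing nonnegative vectors. -/
theorem stmt15 {n m r : ℕ} (A : Fin r → Matrix (Fin m) (Fin n) ℂ)
    (p p' : Fin n → ℝ) (q q' : Fin m → ℝ)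
    (hp : Antitone p) (hp0 : ∀ j, 0 ≤ p j) (hp' : Antitone p') (hp'0 : ∀ j, 0 ≤ p' j)
    (hq : Antitone q) (hq0 : ∀ i, 0 ≤ q i) (hq' : Antitone q') (hq'0 : ∀ i, 0 ≤ q' i)
    (t : ℝ) (ht0 : 0 ≤ t) (ht1 : t ≤ 1) :
    (Real.exp (entropy p) * cap A p q) ^ t *
        (Real.exp (entropy p') * cap A p' q') ^ (1 - t) ≤
      Real.exp (entropy (fun j => t * p j + (1 - t) * p' j)) *
        cap A (fun j => t * p j + (1 - t) * p' j) (fun i => t * q i + (1 - t) * q' i) := by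
  have key := le_cap A _ fun h hh hut =>
    rpow_mul_rpow_mul_exp_neg_entropy_le_capRatio A hp0 hp'0
      (delta_nonneg_of_antitone hp hp0) (delta_nonneg_of_antitone hp' hp'0)
      (delta_nonneg_of_antitone hq hq0) (delta_nonneg_of_antitone hq' hq'0) ht0
      (sub_nonneg.mpr ht1) hh hut
  rwa [Real.exp_neg, ← div_eq_mul_inv, div_le_iff₀' (Real.exp_pos _)] at key
end
end

section
/- Let A be an m×n matrix with nonnegative real entries, r ∈ ℝ^m_{≥0} and c ∈ ℝ^n_{≥0}. Then A is approximately (r,c)-scalable if and only if Σ_{i=1}^m r_i = Σ_{j=1}^n c_j and for every zero submatrix L×R of A (i.e., L ⊆ [m], R ⊆ [n] with A_{ij} = 0 for all i ∈ L, j ∈ R), Σ_{i∈L} r_i ≤ Σ_{j∉R} c_j. -/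
/-!
If `X A Y` has row sums close to `r` and column sums close to `c`, then `Σ r ≈ Σ c`, and on a
zero block `L × R` the rows in `L` only put mass into the columns outside `R`, so
`Σ_{i∈L} r_i ≲ Σ_{j∉R} c_j`; letting the error go to zero gives the conditions.

Conversely, a layer-cake argument turns the zero-block inequalities into the dual inequality
`Σ r_i u_i ≤ Σ c_j w_j` whenever `u_i ≤ w_j` on the support of `A`. This bounds the convex
potential `f(x, y) = Σ A_ij e^{x_i + y_j} - ⟨r, x⟩ - ⟨c, y⟩` from below, so
`f + δ (‖x‖² + ‖y‖²)` attains its minimum. At the minimiser the row and column sums of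
`diag(e^x) A diag(e^y)` deviate from `r` and `c` by `-2δx` and `-2δy`, which are `O(√δ)`.
-/

open Finset MeasureTheory Real Filter

lemma le_of_forall_pos_le_add_mul {a b K : ℝ} (hK : 0 ≤ K) (h : ∀ ε > 0, a ≤ b + K * ε) :
    a ≤ b :=
  le_of_forall_pos_le_add fun ε hε => (h (ε / (K + 1)) (by positivity)).trans <| by
    gcongr
    rw [mul_div_assoc', div_le_iff₀ (by positivity)]
    nlinarith

lemma abs_sum_sub_sum_le_card_mul {ι : Type*} [Fintype ι] {f g : ι → ℝ} {ε : ℝ}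
    (h : √(∑ i, (f i - g i) ^ 2) ≤ ε) (s : Finset ι) :
    |∑ i ∈ s, f i - ∑ i ∈ s, g i| ≤ Fintype.card ι * ε := by
  have hle : ∀ i, |f i - g i| ≤ ε := fun i =>
    (abs_le_sqrt (single_le_sum (fun j _ => sq_nonneg (f j - g j)) (mem_univ i))).trans h
  calc |∑ i ∈ s, f i - ∑ i ∈ s, g i| ≤ ∑ i ∈ s, |f i - g i| := by
        rw [← sum_sub_distrib]; exact abs_sum_le_sum_abs _ _
    _ ≤ s.card * ε := by simpa using sum_le_sum fun i (_ : i ∈ s) => hle i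
    _ ≤ Fintype.card ι * ε := by
        gcongr
        · exact (sqrt_nonneg _).trans h
        · exact card_le_univ s

lemma integral_indicator_Ico_const {a b : ℝ} (hab : a ≤ b) (k : ℝ) :
    ∫ t, (Set.Ico a b).indicator (fun _ => k) t = k * (b - a) := by
  rw [integral_indicator_const k measurableSet_Ico, measureReal_def, Real.volume_Ico,
    ENNReal.toReal_ofReal (sub_nonneg.2 hab), smul_eq_mul, mul_comm]

lemma integrable_indicator_Ico_const (a b k : ℝ) :
    Integrable ((Set.Ico a b).indicator fun _ => k) := by
  rw [integrable_indicator_iff measurableSet_Ico]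
  exact integrableOn_const (by simp)

lemma sum_indicator_Ico_apply {ι : Type*} [Fintype ι] (r u : ι → ℝ) (a t : ℝ)
    [DecidablePred fun i => t < u i] :
    ∑ i, (Set.Ico a (u i)).indicator (fun _ => r i) t =
      if a ≤ t then ∑ i with t < u i, r i else 0 := by
  split_ifs with ht <;> simp [Set.indicator_apply, sum_filter, ht]

lemma sum_mul_sub_eq_integral {ι : Type*} [Fintype ι] (r u : ι → ℝ) {a : ℝ}
    (ha : ∀ i, a ≤ u i) :
    ∑ i, r i * (u i - a) = ∫ t, ∑ i, (Set.Ico a (u i)).indicator (fun _ => r i) t := by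
  rw [integral_finsetSum _ fun i _ => integrable_indicator_Ico_const _ _ _]
  exact sum_congr rfl fun i _ => (integral_indicator_Ico_const (ha i) _).symm

/-- The first moments of two finitely supported signed measures of equal mass are ordered as
their tails are. -/
lemma sum_mul_le_sum_mul_of_tail_le {ι κ : Type*} [Fintype ι] [Fintype κ] {r u : ι → ℝ}
    {c w : κ → ℝ} (hsum : ∑ i, r i = ∑ j, c j)
    (htail : ∀ t, ∑ i with t < u i, r i ≤ ∑ j with t < w j, c j) :
    ∑ i, r i * u i ≤ ∑ j, c j * w j := by
  classical
  obtain ⟨a, ha⟩ := ((Set.finite_range u).union (Set.finite_range w)).bddBelow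
  have hle : ∑ i, r i * (u i - a) ≤ ∑ j, c j * (w j - a) := by
    rw [sum_mul_sub_eq_integral r u fun i => ha (Or.inl ⟨i, rfl⟩),
      sum_mul_sub_eq_integral c w fun j => ha (Or.inr ⟨j, rfl⟩)]
    refine integral_mono (integrable_finsetSum _ fun i _ => integrable_indicator_Ico_const _ _ _)
      (integrable_finsetSum _ fun j _ => integrable_indicator_Ico_const _ _ _) fun t => ?_
    simp only [sum_indicator_Ico_apply]
    split_ifs
    exacts [htail t, le_rfl]
  simp only [mul_sub, sum_sub_distrib, ← sum_mul, hsum] at hle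
  linarith

lemma exists_le_mul_exp_sub_mul {a T : ℝ} (ha : 0 < a) (hT : 0 ≤ T) :
    ∃ C, ∀ z, C ≤ a * exp z - T * z := by
  rcases hT.eq_or_lt with rfl | hT
  · exact ⟨0, fun z => by have := exp_pos z; nlinarith⟩
  · refine ⟨T - T * log (T / a), fun z => ?_⟩
    have htangent := add_one_le_exp (z - log (T / a))
    rw [exp_sub, exp_log (div_pos hT ha), div_div_eq_mul_div, le_div_iff₀ hT] at htangent
    linarith

lemma pi_norm_sq_le_sum_sq {ι : Type*} [Fintype ι] (x : ι → ℝ) : ‖x‖ ^ 2 ≤ ∑ i, x i ^ 2 := by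
  rw [← Real.le_sqrt (norm_nonneg _) (sum_nonneg fun i _ => sq_nonneg (x i))]
  exact (pi_norm_le_iff_of_nonneg (sqrt_nonneg _)).2 fun i =>
    abs_le_sqrt (single_le_sum (fun j _ => sq_nonneg (x j)) (mem_univ i))

lemma prod_pi_norm_sq_le_sum_sq {ι κ : Type*} [Fintype ι] [Fintype κ]
    (p : (ι → ℝ) × (κ → ℝ)) : ‖p‖ ^ 2 ≤ ∑ i, p.1 i ^ 2 + ∑ j, p.2 j ^ 2 := by
  have h₁ := pi_norm_sq_le_sum_sq p.1
  have h₂ := pi_norm_sq_le_sum_sq p.2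
  rw [Prod.norm_def]
  rcases max_choice ‖p.1‖ ‖p.2‖ with h | h <;> rw [h] <;>
    nlinarith [sq_nonneg ‖p.1‖, sq_nonneg ‖p.2‖]

lemma tendsto_cocompact_atTop_of_le {E : Type*} [SeminormedAddGroup E] [ProperSpace E]
    {F : E → ℝ} {C δ : ℝ} (hδ : 0 < δ) (hF : ∀ p, C + δ * ‖p‖ ^ 2 ≤ F p) :
    Tendsto F (cocompact E) atTop :=
  tendsto_atTop_mono hF <| tendsto_atTop_add_const_left _ C <|
    ((tendsto_pow_atTop two_ne_zero).comp tendsto_norm_cocompact_atTop).const_mul_atTop hδ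

lemma isMinOn_apply_of_isMinOn_sum {ι : Type*} [Fintype ι] {g : ι → ℝ → ℝ} {x : ι → ℝ}
    (h : IsMinOn (fun x' : ι → ℝ => ∑ i, g i (x' i)) Set.univ x) (i : ι) :
    IsMinOn (g i) Set.univ (x i) := by
  classical
  intro t _
  have := h (Set.mem_univ (Function.update x i t))
  rw [Set.mem_ofPred_eq] at this
  simp_rw [Function.apply_update (fun k => g k) x] at this
  rw [sum_update_of_mem (mem_univ i), ← add_sum_erase _ _ (mem_univ i),
    sdiff_singleton_eq_erase] at this
  exact le_of_add_le_add_right this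

lemma mul_exp_sub_eq_of_isMinOn {a b δ s : ℝ}
    (h : IsMinOn (fun t => a * exp t - b * t + δ * t ^ 2) Set.univ s) :
    a * exp s - b = -(2 * δ * s) := by
  have hderiv : HasDerivAt (fun t => a * exp t - b * t + δ * t ^ 2)
      (a * exp s - b * 1 + δ * (↑2 * s ^ (2 - 1))) s :=
    (((hasDerivAt_exp s).const_mul a).sub ((hasDerivAt_id s).const_mul b)).add
      ((hasDerivAt_pow 2 s).const_mul δ)
  have := (h.isLocalMin univ_mem).hasDerivAt_eq_zero hderiv
  simp only [mul_one, Nat.add_one_sub_one, pow_one] at this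
  linarith

lemma sqrt_sum_sq_two_mul_le {ι : Type*} [Fintype ι] {δ D ε : ℝ} (hδ : 0 ≤ δ) (hε : 0 ≤ ε)
    (hδD : 4 * δ * D ≤ ε ^ 2) {v : ι → ℝ} (hv : δ * ∑ i, v i ^ 2 ≤ D) :
    √(∑ i, (-(2 * δ * v i)) ^ 2) ≤ ε := by
  rw [sqrt_le_left hε]
  calc ∑ i, (-(2 * δ * v i)) ^ 2 = 4 * δ * (δ * ∑ i, v i ^ 2) := by
        rw [mul_sum, mul_sum]; exact sum_congr rfl fun i _ => by ring
    _ ≤ 4 * δ * D := by gcongr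
    _ ≤ ε ^ 2 := hδD

section Scaling

variable {ι κ : Type*} [Fintype ι] [Fintype κ] (A : Matrix ι κ ℝ) (r : ι → ℝ) (c : κ → ℝ)

def ApproxScalable : Prop :=
  ∀ ε : ℝ, 0 < ε → ∃ (x : ι → ℝ) (y : κ → ℝ), (∀ i, 0 < x i) ∧ (∀ j, 0 < y j) ∧
    √(∑ i, (x i * (∑ j, A i j * y j) - r i) ^ 2) ≤ ε ∧
    √(∑ j, (y j * (∑ i, x i * A i j) - c j) ^ 2) ≤ ε

lemma sum_mul_rowSum_eq (x : ι → ℝ) (y : κ → ℝ) :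
    ∑ i, x i * ∑ j, A i j * y j = ∑ j, y j * ∑ i, x i * A i j :=
  (Matrix.dotProduct_mulVec x A y).trans (dotProduct_comm _ _)

lemma sum_mul_rowSum_le_of_zero_submatrix [DecidableEq κ] (hA : ∀ i j, 0 ≤ A i j)
    {x : ι → ℝ} {y : κ → ℝ} (hx : ∀ i, 0 ≤ x i) (hy : ∀ j, 0 ≤ y j)
    {L : Finset ι} {R : Finset κ} (hLR : ∀ i ∈ L, ∀ j ∈ R, A i j = 0) :
    ∑ i ∈ L, x i * ∑ j, A i j * y j ≤ ∑ j ∈ Rᶜ, y j * ∑ i, x i * A i j := calc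
  ∑ i ∈ L, x i * ∑ j, A i j * y j = ∑ i ∈ L, ∑ j ∈ Rᶜ, x i * A i j * y j := by
      refine sum_congr rfl fun i hi => ?_
      rw [mul_sum, ← sum_subset (subset_univ Rᶜ) fun j _ hj => by
        simp [hLR i hi j (by simpa using hj)]]
      exact sum_congr rfl fun j _ => by ring
  _ ≤ ∑ i, ∑ j ∈ Rᶜ, x i * A i j * y j :=
      sum_le_sum_of_subset_of_nonneg (subset_univ L) fun i _ _ => sum_nonneg fun j _ =>
        mul_nonneg (mul_nonneg (hx i) (hA i j)) (hy j)
  _ = ∑ j ∈ Rᶜ, y j * ∑ i, x i * A i j := by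
      rw [sum_comm]
      exact sum_congr rfl fun j _ => by rw [mul_sum]; exact sum_congr rfl fun i _ => by ring

lemma sum_mul_le_sum_mul_of_zero_submatrix [DecidableEq κ] (hsum : ∑ i, r i = ∑ j, c j)
    (hz : ∀ (L : Finset ι) (R : Finset κ), (∀ i ∈ L, ∀ j ∈ R, A i j = 0) →
      ∑ i ∈ L, r i ≤ ∑ j ∈ Rᶜ, c j)
    {u : ι → ℝ} {w : κ → ℝ} (huw : ∀ i j, A i j ≠ 0 → u i ≤ w j) :
    ∑ i, r i * u i ≤ ∑ j, c j * w j := by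
  classical
  refine sum_mul_le_sum_mul_of_tail_le hsum fun t => ?_
  have := hz {i | t < u i} {j | w j ≤ t} fun i hi j hj => by
    simp only [mem_filter, mem_univ, true_and] at hi hj
    by_contra hA
    linarith [huw i j hA]
  simpa only [compl_filter, not_le] using this

/-- `(x, y)` is a critical point of this potential exactly when `diag(e^x) A diag(e^y)` has row
sums `r` and column sums `c`. -/
noncomputable def scalingPotential (x : ι → ℝ) (y : κ → ℝ) : ℝ :=
  ∑ i, ∑ j, exp (x i) * A i j * exp (y j) - ∑ i, r i * x i - ∑ j, c j * y j

noncomputable def regularizedPotential (δ : ℝ) (x : ι → ℝ) (y : κ → ℝ) : ℝ :=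
  scalingPotential A r c x y + δ * (∑ i, x i ^ 2 + ∑ j, y j ^ 2)

lemma scalingPotential_bddBelow [DecidableEq κ] (hA : ∀ i j, 0 ≤ A i j)
    (hsum : ∑ i, r i = ∑ j, c j)
    (hz : ∀ (L : Finset ι) (R : Finset κ), (∀ i ∈ L, ∀ j ∈ R, A i j = 0) →
      ∑ i ∈ L, r i ≤ ∑ j ∈ Rᶜ, c j) :
    ∃ C, ∀ x y, C ≤ scalingPotential A r c x y := by
  classical
  have hdual := fun u w => sum_mul_le_sum_mul_of_zero_submatrix A r c hsum hz (u := u) (w := w)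
  have hterm_nonneg : ∀ (x : ι → ℝ) (y : κ → ℝ) i j, 0 ≤ exp (x i) * A i j * exp (y j) :=
    fun x y i j => by have := hA i j; positivity
  set S : Finset (ι × κ) := {p | A p.1 p.2 ≠ 0}
  rcases S.eq_empty_or_nonempty with hS | hS
  · refine ⟨0, fun x y => ?_⟩
    have := hdual x (-y) fun i j hij => absurd (by simp [S, hij] : (i, j) ∈ S) (by simp [hS])
    have := sum_nonneg fun i (_ : i ∈ univ) =>
      sum_nonneg fun j (_ : j ∈ univ) => hterm_nonneg x y i j
    simp only [scalingPotential, Pi.neg_apply, mul_neg, sum_neg_distrib] at *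
    linarith
  obtain ⟨p₀, hp₀, hmin⟩ := S.exists_min_image (fun p => A p.1 p.2) hS
  have hrsum : 0 ≤ ∑ i, r i := by simpa [hsum] using hz ∅ ∅ (by simp)
  obtain ⟨C, hC⟩ := exists_le_mul_exp_sub_mul
    ((hA _ _).lt_of_ne (Ne.symm (by simpa [S] using hp₀))) hrsum
  refine ⟨C, fun x y => ?_⟩
  obtain ⟨p, hp, hmax⟩ := S.exists_max_image (fun p => x p.1 + y p.2) hS
  set M := x p.1 + y p.2
  have hlin : ∑ i, r i * x i + ∑ j, c j * y j ≤ (∑ i, r i) * M := by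
    have := hdual (fun i => x i - M) (-y) fun i j hij => by
      have := hmax (i, j) (by simp [S, hij])
      simp only [Pi.neg_apply]; linarith
    simp only [Pi.neg_apply, mul_neg, sum_neg_distrib, mul_sub, sum_sub_distrib,
      ← sum_mul] at this
    linarith
  have hexp : A p₀.1 p₀.2 * exp M ≤ ∑ i, ∑ j, exp (x i) * A i j * exp (y j) := calc
    A p₀.1 p₀.2 * exp M ≤ exp (x p.1) * A p.1 p.2 * exp (y p.2) := by
      rw [mul_comm (exp _), mul_assoc, ← exp_add]
      gcongr
      exact hmin p hp
    _ ≤ ∑ i, ∑ j, exp (x i) * A i j * exp (y j) :=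
      (single_le_sum (fun j _ => hterm_nonneg x y p.1 j) (mem_univ p.2)).trans
        (single_le_sum (fun i _ => sum_nonneg fun j _ => hterm_nonneg x y i j) (mem_univ p.1))
  have := hC M
  rw [scalingPotential]
  linarith

lemma exists_isMin_regularizedPotential {δ C : ℝ} (hδ : 0 < δ)
    (hC : ∀ x y, C ≤ scalingPotential A r c x y) :
    ∃ x y, ∀ x' y', regularizedPotential A r c δ x y ≤ regularizedPotential A r c δ x' y' := by
  have hcont : Continuous fun p : (ι → ℝ) × (κ → ℝ) => regularizedPotential A r c δ p.1 p.2 := by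
    unfold regularizedPotential scalingPotential
    fun_prop
  obtain ⟨p, hp⟩ := hcont.exists_forall_le <| tendsto_cocompact_atTop_of_le hδ fun p => by
    have := hC p.1 p.2
    have := prod_pi_norm_sq_le_sum_sq p
    unfold regularizedPotential
    nlinarith
  exact ⟨p.1, p.2, fun x' y' => hp (x', y')⟩

lemma regularizedPotential_eq_sum_rows (δ : ℝ) (x : ι → ℝ) (y : κ → ℝ) :
    regularizedPotential A r c δ x y =
      ∑ i, ((∑ j, A i j * exp (y j)) * exp (x i) - r i * x i + δ * x i ^ 2) +
        (δ * ∑ j, y j ^ 2 - ∑ j, c j * y j) := by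
  have : ∑ i, ∑ j, exp (x i) * A i j * exp (y j) =
      ∑ i, (∑ j, A i j * exp (y j)) * exp (x i) :=
    sum_congr rfl fun i _ => by rw [sum_mul]; exact sum_congr rfl fun j _ => by ring
  simp only [regularizedPotential, scalingPotential, this, sum_add_distrib, sum_sub_distrib,
    mul_add, mul_sum]
  ring

lemma regularizedPotential_eq_sum_cols (δ : ℝ) (x : ι → ℝ) (y : κ → ℝ) :
    regularizedPotential A r c δ x y =
      ∑ j, ((∑ i, exp (x i) * A i j) * exp (y j) - c j * y j + δ * y j ^ 2) +
        (δ * ∑ i, x i ^ 2 - ∑ i, r i * x i) := by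
  have : ∑ i, ∑ j, exp (x i) * A i j * exp (y j) =
      ∑ j, (∑ i, exp (x i) * A i j) * exp (y j) := by
    rw [sum_comm]; simp only [sum_mul]
  simp only [regularizedPotential, scalingPotential, this, sum_add_distrib, sum_sub_distrib,
    mul_add, mul_sum]
  ring

section Minimizer

variable {A r c} {δ : ℝ} {x : ι → ℝ} {y : κ → ℝ}
  (hmin : ∀ x' y', regularizedPotential A r c δ x y ≤ regularizedPotential A r c δ x' y')
include hmin

lemma exp_mul_rowSum_sub_eq (i : ι) :
    exp (x i) * ∑ j, A i j * exp (y j) - r i = -(2 * δ * x i) := by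
  rw [mul_comm]
  refine mul_exp_sub_eq_of_isMinOn (isMinOn_apply_of_isMinOn_sum (g := fun i t =>
    (∑ j, A i j * exp (y j)) * exp t - r i * t + δ * t ^ 2) (fun x' _ => ?_) i)
  have := hmin x' y
  rw [regularizedPotential_eq_sum_rows, regularizedPotential_eq_sum_rows] at this
  simp only [Set.mem_ofPred_eq]
  linarith

lemma exp_mul_colSum_sub_eq (j : κ) :
    exp (y j) * ∑ i, exp (x i) * A i j - c j = -(2 * δ * y j) := by
  rw [mul_comm]
  refine mul_exp_sub_eq_of_isMinOn (isMinOn_apply_of_isMinOn_sum (g := fun j t =>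
    (∑ i, exp (x i) * A i j) * exp t - c j * t + δ * t ^ 2) (fun y' _ => ?_) j)
  have := hmin x y'
  rw [regularizedPotential_eq_sum_cols, regularizedPotential_eq_sum_cols] at this
  simp only [Set.mem_ofPred_eq]
  linarith

end Minimizer

variable {A r c}

theorem approxScalable_of_zero_submatrix [DecidableEq κ] (hA : ∀ i j, 0 ≤ A i j)
    (hsum : ∑ i, r i = ∑ j, c j)
    (hz : ∀ (L : Finset ι) (R : Finset κ), (∀ i ∈ L, ∀ j ∈ R, A i j = 0) →
      ∑ i ∈ L, r i ≤ ∑ j ∈ Rᶜ, c j) :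
    ApproxScalable A r c := by
  intro ε hε
  obtain ⟨C, hC⟩ := scalingPotential_bddBelow A r c hA hsum hz
  set D := scalingPotential A r c 0 0 - C
  have hD : 0 ≤ D := sub_nonneg.2 (hC 0 0)
  set δ := ε ^ 2 / (4 * (D + 1))
  have hδ : 0 < δ := by positivity
  have hδD : 4 * δ * D ≤ ε ^ 2 := by
    have : 4 * δ * (D + 1) = ε ^ 2 := by simp only [δ]; field_simp
    linarith
  obtain ⟨x, y, hmin⟩ := exists_isMin_regularizedPotential A r c hδ hC
  have hx := sum_nonneg fun i (_ : i ∈ univ) => sq_nonneg (x i)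
  have hy := sum_nonneg fun j (_ : j ∈ univ) => sq_nonneg (y j)
  have hreg : δ * (∑ i, x i ^ 2 + ∑ j, y j ^ 2) ≤ D := by
    have := hmin 0 0
    have := hC x y
    simp only [regularizedPotential, Pi.zero_apply, ne_eq, OfNat.ofNat_ne_zero,
      not_false_eq_true, zero_pow, sum_const_zero, add_zero, mul_zero] at *
    linarith
  refine ⟨fun i => exp (x i), fun j => exp (y j), fun i => exp_pos _, fun j => exp_pos _, ?_, ?_⟩
  · simp_rw [exp_mul_rowSum_sub_eq hmin]
    exact sqrt_sum_sq_two_mul_le hδ.le hε.le hδD (by nlinarith)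
  · simp_rw [exp_mul_colSum_sub_eq hmin]
    exact sqrt_sum_sq_two_mul_le hδ.le hε.le hδD (by nlinarith)

lemma ApproxScalable.sum_le_sum_compl [DecidableEq κ] (h : ApproxScalable A r c)
    (hA : ∀ i j, 0 ≤ A i j) {L : Finset ι} {R : Finset κ}
    (hLR : ∀ i ∈ L, ∀ j ∈ R, A i j = 0) :
    ∑ i ∈ L, r i ≤ ∑ j ∈ Rᶜ, c j := by
  refine le_of_forall_pos_le_add_mul (K := Fintype.card ι + Fintype.card κ) (by positivity)
    fun ε hε => ?_
  obtain ⟨x, y, hx, hy, hrow, hcol⟩ := h ε hε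
  have hr := abs_le.1 (abs_sum_sub_sum_le_card_mul hrow L)
  have hc := abs_le.1 (abs_sum_sub_sum_le_card_mul hcol Rᶜ)
  have := sum_mul_rowSum_le_of_zero_submatrix A hA (fun i => (hx i).le) (fun j => (hy j).le) hLR
  linarith

lemma ApproxScalable.sum_le_sum (h : ApproxScalable A r c) : ∑ j, c j ≤ ∑ i, r i := by
  refine le_of_forall_pos_le_add_mul (K := Fintype.card ι + Fintype.card κ) (by positivity)
    fun ε hε => ?_
  obtain ⟨x, y, -, -, hrow, hcol⟩ := h ε hε
  have hr := abs_le.1 (abs_sum_sub_sum_le_card_mul hrow univ)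
  have hc := abs_le.1 (abs_sum_sub_sum_le_card_mul hcol univ)
  have := sum_mul_rowSum_eq A x y
  linarith

end Scaling

theorem stmt16_general {m n : ℕ} (A : Matrix (Fin m) (Fin n) ℝ) (hA : ∀ i j, 0 ≤ A i j)
    (r : Fin m → ℝ) (c : Fin n → ℝ) :
    (∀ ε : ℝ, 0 < ε → ∃ (x : Fin m → ℝ) (y : Fin n → ℝ),
      (∀ i, 0 < x i) ∧ (∀ j, 0 < y j) ∧
      Real.sqrt (∑ i, (x i * (∑ j, A i j * y j) - r i) ^ 2) ≤ ε ∧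
      Real.sqrt (∑ j, (y j * (∑ i, x i * A i j) - c j) ^ 2) ≤ ε)
    ↔
    ((∑ i, r i = ∑ j, c j) ∧
      ∀ (L : Finset (Fin m)) (R : Finset (Fin n)),
        (∀ i ∈ L, ∀ j ∈ R, A i j = 0) → ∑ i ∈ L, r i ≤ ∑ j ∈ Rᶜ, c j) := by
  refine ⟨fun (h : ApproxScalable A r c) => ⟨?_, fun L R hLR => h.sum_le_sum_compl hA hLR⟩,
    fun ⟨hsum, hz⟩ => approxScalable_of_zero_submatrix hA hsum hz⟩
  have hle : ∑ i, r i ≤ ∑ j, c j := by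
    simpa using h.sum_le_sum_compl hA (L := univ) (R := ∅) (by simp)
  exact hle.antisymm h.sum_le_sum

/-- Theorem (Rothblum–Schneider): a nonnegative matrix `A` is approximately `(r,c)`-scalable
iff `Σ r = Σ c` and for every zero submatrix `L × R` of `A`, `Σ_{i∈L} r_i ≤ Σ_{j∉R} c_j`. -/
theorem stmt16 {m n : ℕ} (A : Matrix (Fin m) (Fin n) ℝ) (hA : ∀ i j, 0 ≤ A i j)
    (r : Fin m → ℝ) (c : Fin n → ℝ) (hr : ∀ i, 0 ≤ r i) (hc : ∀ j, 0 ≤ c j) :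
    (∀ ε : ℝ, 0 < ε → ∃ (x : Fin m → ℝ) (y : Fin n → ℝ),
      (∀ i, 0 < x i) ∧ (∀ j, 0 < y j) ∧
      Real.sqrt (∑ i, (x i * (∑ j, A i j * y j) - r i) ^ 2) ≤ ε ∧
      Real.sqrt (∑ j, (y j * (∑ i, x i * A i j) - c j) ^ 2) ≤ ε)
    ↔
    ((∑ i, r i = ∑ j, c j) ∧
      ∀ (L : Finset (Fin m)) (R : Finset (Fin n)),
        (∀ i ∈ L, ∀ j ∈ R, A i j = 0) → ∑ i ∈ L, r i ≤ ∑ j ∈ Rᶜ, c j) :=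
  stmt16_general A hA r c
end

section
/- Let s, m be positive integers, n = ms, and for each i ∈ [s] let p(i) = (p_1(i) ≥ … ≥ p_m(i) > 0) be a nonincreasing sequence of positive reals; set P = ⊕_{i=1}^s diag(p(i)) ∈ Mat_n(ℂ). Then there exist m×m positive-semidefinite Hermitian matrices H_1, …, H_s with Σ_{i=1}^s H_i = I_m and the eigenvalues of H_i (with multiplicity, in nonincreasing order) equal to p(i) for each i, if and only if for every ε > 0 there exist an invertible g ∈ Mat_m(ℂ) and invertible h_1, …, h_s ∈ Mat_m(ℂ) such that, with h = ⊕_{i=1}^s h_i, ‖g† T_m^s(h h†) g − I_m‖ ≤ ε and ‖h† (T_m^s)*(g g†) h − P‖ ≤ ε. -/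
open Matrix BigOperators

noncomputable section

/-- The Kraus operators of `T_m^s : Mat_{ms}(ℂ) → Mat_m(ℂ)`: `A_i = [0 | I_m | 0]`, with
`ℂ^{ms}` identified with `ℂ^s ⊗ ℂ^m` (index type `Fin s × Fin m`). -/
def hornKraus (s m : ℕ) : Fin s → Matrix (Fin m) (Fin s × Fin m) ℂ :=
  fun i => fun a jb => if jb.1 = i ∧ jb.2 = a then 1 else 0

/-- The block-diagonal matrix `⊕_{i=1}^s h_i`. -/
def blockDiag {s m : ℕ} (h : Fin s → Matrix (Fin m) (Fin m) ℂ) :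
    Matrix (Fin s × Fin m) (Fin s × Fin m) ℂ :=
  fun jb jb' => if jb.1 = jb'.1 then h jb.1 jb.2 jb'.2 else 0

/-!
Write `X i = gᴴ * h i`. Then `gᴴ T(h hᴴ) g = ∑ X i (X i)ᴴ` and `hᴴ T*(g gᴴ) h = ⊕ (X i)ᴴ X i`, so
approximate scalability asks for `∑ X i (X i)ᴴ ≈ 1` and `(X i)ᴴ X i ≈ diag p(i)`.

If `H i = U i diag p(i) (U i)ᴴ`, then `X i = U i diag √p(i)` solves both equations exactly
(with `g = 1`). Conversely, the diagonal of `(X i)ᴴ X i` bounds the entries of `X i`, so the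
approximate solutions lie in a compact set and an exact solution exists. Then `H i = X i (X i)ᴴ`
sums to `1` and is a Hermitian matrix with the same characteristic polynomial as
`(X i)ᴴ X i = diag p(i)`; Hermitian matrices with equal characteristic polynomials have equal
eigenvalues and hence are unitarily conjugate.
-/

theorem Matrix.IsHermitian.exists_unitary_eq_of_charpoly_eq {n 𝕜 : Type*} [Fintype n]
    [DecidableEq n] [RCLike 𝕜] {A B : Matrix n n 𝕜} (hA : A.IsHermitian) (hB : B.IsHermitian)
    (h : A.charpoly = B.charpoly) :
    ∃ U ∈ unitaryGroup n 𝕜, A = U * B * Uᴴ := by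
  have hA' := hA.spectral_theorem
  have hB' := hB.spectral_theorem
  rw [(hA.eigenvalues_eq_eigenvalues_iff hB).2 h, Unitary.conjStarAlgAut_apply] at hA'
  rw [Unitary.conjStarAlgAut_apply] at hB'
  have hUB := Unitary.coe_star_mul_self hB.eigenvectorUnitary
  set UA : Matrix n n 𝕜 := (hA.eigenvectorUnitary : Matrix n n 𝕜)
  set UB : Matrix n n 𝕜 := (hB.eigenvectorUnitary : Matrix n n 𝕜)
  set Λ : Matrix n n 𝕜 := diagonal (RCLike.ofReal ∘ hB.eigenvalues)
  refine ⟨UA * star UB,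
    mul_mem hA.eigenvectorUnitary.2 (Unitary.star_mem hB.eigenvectorUnitary.2), ?_⟩
  rw [← star_eq_conjTranspose, star_mul, star_star, hB']
  calc A = UA * (star UB * UB) * Λ * (star UB * UB) * star UA := by
          rw [hUB, mul_one, mul_one]; exact hA'
    _ = _ := by simp only [mul_assoc]

theorem Matrix.exists_unitary_mul_conjTranspose_eq {n 𝕜 : Type*} [Fintype n]
    [DecidableEq n] [RCLike 𝕜] {B : Matrix n n 𝕜} (hB : B.IsHermitian) (X : Matrix n n 𝕜)
    (hX : Xᴴ * X = B) :
    ∃ U ∈ unitaryGroup n 𝕜, X * Xᴴ = U * B * Uᴴ :=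
  (isHermitian_mul_conjTranspose_self X).exists_unitary_eq_of_charpoly_eq hB
    (by rw [← hX, charpoly_mul_comm])

theorem Matrix.exists_isUnit_det_mul_conjTranspose_eq {n 𝕜 : Type*} [Fintype n]
    [DecidableEq n] [RCLike 𝕜] {U : Matrix n n 𝕜} (hU : U ∈ unitaryGroup n 𝕜) {d : n → ℝ}
    (hd : ∀ j, 0 < d j) :
    ∃ X : Matrix n n 𝕜, IsUnit X.det ∧ X * Xᴴ = U * diagonal (fun j => (d j : 𝕜)) * Uᴴ ∧
      Xᴴ * X = diagonal (fun j => (d j : 𝕜)) := by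
  set S : Matrix n n 𝕜 := diagonal fun j => ((√(d j) : ℝ) : 𝕜)
  have hS : Sᴴ = S := by simp [S, diagonal_conjTranspose]
  have hSS : S * S = diagonal fun j => (d j : 𝕜) := by
    simp only [S, diagonal_mul_diagonal, ← RCLike.ofReal_mul, Real.mul_self_sqrt (hd _).le]
  refine ⟨U * S, ?_, ?_, ?_⟩
  · rw [det_mul, det_diagonal]
    refine (UnitaryGroup.det_isUnit ⟨U, hU⟩).mul (isUnit_iff_ne_zero.2 ?_)
    exact Finset.prod_ne_zero_iff.2 fun j _ => by simpa using Real.sqrt_ne_zero'.2 (hd j)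
  · rw [conjTranspose_mul, hS, mul_assoc, ← mul_assoc S, hSS, mul_assoc]
  · rw [conjTranspose_mul, hS, mul_assoc, ← mul_assoc Uᴴ, ← star_eq_conjTranspose,
      (mem_unitaryGroup_iff').1 hU, one_mul, hSS]

theorem IsCompact.exists_eq_zero_of_forall_exists_le {α : Type*} [TopologicalSpace α]
    {K : Set α} (hK : IsCompact K) {f : α → ℝ} (hf : ContinuousOn f K)
    (hf0 : ∀ x ∈ K, 0 ≤ f x) (h : ∀ ε > 0, ∃ x ∈ K, f x ≤ ε) : ∃ x ∈ K, f x = 0 := by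
  obtain ⟨y, hyK, -⟩ := h 1 one_pos
  obtain ⟨x, hxK, hmin⟩ := hK.exists_isMinOn ⟨y, hyK⟩ hf
  refine ⟨x, hxK, le_antisymm (le_of_forall_pos_le_add fun ε hε => ?_) (hf0 x hxK)⟩
  obtain ⟨z, hzK, hz⟩ := h ε hε
  linarith [isMinOn_iff.1 hmin z hzK]

section BlockDiag

variable {s m : ℕ}

lemma blockDiag_mul_blockDiag (h k : Fin s → Matrix (Fin m) (Fin m) ℂ) :
    _root_.blockDiag h * _root_.blockDiag k = _root_.blockDiag fun i => h i * k i := by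
  ext ⟨i, a⟩ ⟨j, b⟩
  by_cases hij : i = j
  · subst hij
    simp [_root_.blockDiag, Matrix.mul_apply, Fintype.sum_prod_type]
  · simp [_root_.blockDiag, Matrix.mul_apply, Fintype.sum_prod_type, hij]

lemma conjTranspose_blockDiag (h : Fin s → Matrix (Fin m) (Fin m) ℂ) :
    (_root_.blockDiag h)ᴴ = _root_.blockDiag fun i => (h i)ᴴ := by
  ext ⟨i, a⟩ ⟨j, b⟩
  by_cases hij : i = j
  · subst hij; simp [_root_.blockDiag]
  · simp [_root_.blockDiag, hij, Ne.symm hij]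

lemma blockDiag_sub_blockDiag (h k : Fin s → Matrix (Fin m) (Fin m) ℂ) :
    _root_.blockDiag h - _root_.blockDiag k = _root_.blockDiag fun i => h i - k i := by
  ext ⟨i, a⟩ ⟨j, b⟩
  by_cases hij : i = j <;> simp [_root_.blockDiag, hij]

lemma diagonal_eq_blockDiag (d : Fin s → Fin m → ℂ) :
    diagonal (fun ia : Fin s × Fin m => d ia.1 ia.2) =
      _root_.blockDiag fun i => diagonal (d i) := by
  ext ⟨i, a⟩ ⟨j, b⟩
  by_cases hij : i = j
  · subst hij; by_cases hab : a = b <;> simp [_root_.blockDiag, hab]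
  · simp [_root_.blockDiag, hij]

lemma cpMap_hornKraus_blockDiag (h : Fin s → Matrix (Fin m) (Fin m) ℂ) :
    cpMap (hornKraus s m) (_root_.blockDiag h) = ∑ i, h i := by
  ext a b
  simp [cpMap, hornKraus, _root_.blockDiag, Matrix.sum_apply, Matrix.mul_apply,
    Fintype.sum_prod_type, ite_and]

lemma cpDual_hornKraus (Y : Matrix (Fin m) (Fin m) ℂ) :
    cpDual (hornKraus s m) Y = _root_.blockDiag fun _ => Y := by
  ext ⟨i, a⟩ ⟨j, b⟩
  by_cases hij : i = j
  · subst hij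
    simp [cpDual, hornKraus, _root_.blockDiag, Matrix.sum_apply, Matrix.mul_apply, ite_and]
  · simp [cpDual, hornKraus, _root_.blockDiag, Matrix.sum_apply, Matrix.mul_apply, ite_and, hij]

lemma blockDiag_eq_zero_iff {h : Fin s → Matrix (Fin m) (Fin m) ℂ} :
    _root_.blockDiag h = 0 ↔ ∀ i, h i = 0 := by
  refine ⟨fun h0 i => ?_, fun h0 => ?_⟩
  · ext a b
    simpa [_root_.blockDiag] using congr_fun (congr_fun h0 (i, a)) (i, b)
  · ext ⟨i, a⟩ ⟨j, b⟩
    simp [_root_.blockDiag, h0]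

@[fun_prop]
lemma continuous_blockDiag :
    Continuous (_root_.blockDiag : (Fin s → Matrix (Fin m) (Fin m) ℂ) → _) := by
  refine continuous_matrix fun ia jb => ?_
  simp only [_root_.blockDiag]
  split_ifs <;> fun_prop

lemma conjTranspose_mul_cpMap_hornKraus_mul (g : Matrix (Fin m) (Fin m) ℂ)
    (h : Fin s → Matrix (Fin m) (Fin m) ℂ) :
    gᴴ * cpMap (hornKraus s m) (_root_.blockDiag h * (_root_.blockDiag h)ᴴ) * g =
      ∑ i, gᴴ * h i * (gᴴ * h i)ᴴ := by
  rw [conjTranspose_blockDiag, blockDiag_mul_blockDiag, cpMap_hornKraus_blockDiag,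
    Matrix.mul_sum, Matrix.sum_mul]
  simp only [conjTranspose_mul, conjTranspose_conjTranspose, mul_assoc]

lemma conjTranspose_blockDiag_mul_cpDual_hornKraus_mul (g : Matrix (Fin m) (Fin m) ℂ)
    (h : Fin s → Matrix (Fin m) (Fin m) ℂ) :
    (_root_.blockDiag h)ᴴ * cpDual (hornKraus s m) (g * gᴴ) * _root_.blockDiag h =
      _root_.blockDiag fun i => (gᴴ * h i)ᴴ * (gᴴ * h i) := by
  rw [cpDual_hornKraus, conjTranspose_blockDiag, blockDiag_mul_blockDiag, blockDiag_mul_blockDiag]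
  simp only [conjTranspose_mul, conjTranspose_conjTranspose, mul_assoc]

end BlockDiag

section Frobenius

attribute [local instance] Matrix.frobeniusNormedAddCommGroup

variable {ι κ : Type*} [Fintype ι] [Fintype κ]

lemma frob_eq_norm (A : Matrix ι κ ℂ) : frob A = ‖A‖ := by
  rw [frob, frobenius_norm_def, ← Real.sqrt_eq_rpow]
  congr 1
  simp [Matrix.trace, Matrix.mul_apply, Complex.mul_conj, Complex.sq_norm]

@[fun_prop]
lemma continuous_frob : Continuous (frob : Matrix ι κ ℂ → ℝ) := by
  rw [show (frob : Matrix ι κ ℂ → ℝ) = (‖·‖) from funext frob_eq_norm]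
  exact continuous_norm

lemma frob_nonneg (A : Matrix ι κ ℂ) : 0 ≤ frob A := Real.sqrt_nonneg _

lemma frob_eq_zero {A : Matrix ι κ ℂ} : frob A = 0 ↔ A = 0 := by
  rw [frob_eq_norm, norm_eq_zero]

lemma norm_apply_le_frob (A : Matrix ι κ ℂ) (a : ι) (b : κ) : ‖A a b‖ ≤ frob A := by
  rw [frob_eq_norm, frobenius_norm_def, ← Real.sqrt_eq_rpow,
    Real.le_sqrt (norm_nonneg _) (by positivity)]
  simp_rw [Real.rpow_two]
  calc ‖A a b‖ ^ 2 ≤ ∑ j, ‖A a j‖ ^ 2 :=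
        Finset.single_le_sum (f := fun j => ‖A a j‖ ^ 2) (fun _ _ => by positivity)
          (Finset.mem_univ b)
    _ ≤ ∑ i, ∑ j, ‖A i j‖ ^ 2 :=
        Finset.single_le_sum (f := fun i => ∑ j, ‖A i j‖ ^ 2)
          (fun _ _ => by positivity) (Finset.mem_univ a)

end Frobenius

section ScalingDefect

variable {s m : ℕ}

def scalingDefect (D X : Fin s → Matrix (Fin m) (Fin m) ℂ) : ℝ :=
  frob (∑ i, X i * (X i)ᴴ - 1) + frob (_root_.blockDiag fun i => (X i)ᴴ * X i - D i)

variable (D : Fin s → Matrix (Fin m) (Fin m) ℂ)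

lemma scalingDefect_nonneg (X : Fin s → Matrix (Fin m) (Fin m) ℂ) : 0 ≤ scalingDefect D X :=
  add_nonneg (frob_nonneg _) (frob_nonneg _)

lemma continuous_scalingDefect : Continuous (scalingDefect D) := by
  unfold scalingDefect
  fun_prop

lemma scalingDefect_eq_zero_iff {X : Fin s → Matrix (Fin m) (Fin m) ℂ} :
    scalingDefect D X = 0 ↔ ∑ i, X i * (X i)ᴴ = 1 ∧ ∀ i, (X i)ᴴ * X i = D i := by
  simp only [scalingDefect, add_eq_zero_iff_of_nonneg (frob_nonneg _) (frob_nonneg _),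
    frob_eq_zero, blockDiag_eq_zero_iff, sub_eq_zero]

lemma sq_norm_apply_le_scalingDefect (X : Fin s → Matrix (Fin m) (Fin m) ℂ) (i : Fin s)
    (a b : Fin m) : ‖X i a b‖ ^ 2 ≤ ‖D i b b‖ + scalingDefect D X := by
  have hdiag : ((X i)ᴴ * X i) b b = ((∑ c, ‖X i c b‖ ^ 2 : ℝ) : ℂ) := by
    simp [mul_apply, Complex.conj_mul']
  have hentry : ‖((X i)ᴴ * X i) b b - D i b b‖ ≤ scalingDefect D X := by
    refine le_trans ?_ (le_add_of_nonneg_left (frob_nonneg _))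
    simpa [_root_.blockDiag] using
      norm_apply_le_frob (_root_.blockDiag fun i => (X i)ᴴ * X i - D i) (i, b) (i, b)
  calc ‖X i a b‖ ^ 2 ≤ ∑ c, ‖X i c b‖ ^ 2 :=
        Finset.single_le_sum (f := fun c => ‖X i c b‖ ^ 2) (fun _ _ => by positivity)
          (Finset.mem_univ a)
    _ = ‖((X i)ᴴ * X i) b b‖ := by
        rw [hdiag, Complex.norm_real, Real.norm_of_nonneg (by positivity)]
    _ ≤ ‖D i b b‖ + ‖((X i)ᴴ * X i) b b - D i b b‖ := norm_le_insert' _ _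
    _ ≤ ‖D i b b‖ + scalingDefect D X := by gcongr

lemma exists_scalingDefect_eq_zero (h : ∀ ε > 0, ∃ X, scalingDefect D X ≤ ε) :
    ∃ X, scalingDefect D X = 0 := by
  set K : Set (Fin s → Matrix (Fin m) (Fin m) ℂ) :=
    Set.univ.pi fun i => Set.univ.pi fun a => Set.univ.pi fun b =>
      Metric.closedBall 0 √(‖D i b b‖ + 1)
  have hK : IsCompact K := isCompact_univ_pi fun _ => isCompact_univ_pi fun _ =>
    isCompact_univ_pi fun _ => isCompact_closedBall _ _
  suffices ∀ ε > 0, ∃ X ∈ K, scalingDefect D X ≤ ε by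
    obtain ⟨X, -, hX⟩ := hK.exists_eq_zero_of_forall_exists_le
      (continuous_scalingDefect D).continuousOn (fun X _ => scalingDefect_nonneg D X) this
    exact ⟨X, hX⟩
  intro ε hε
  obtain ⟨X, hX⟩ := h (min ε 1) (lt_min hε one_pos)
  refine ⟨X, ?_, hX.trans (min_le_left _ _)⟩
  intro i _ a _ b _
  rw [Metric.mem_closedBall, dist_zero_right]
  refine Real.le_sqrt_of_sq_le ((sq_norm_apply_le_scalingDefect D X i a b).trans ?_)
  linarith [min_le_right ε 1]

end ScalingDefect

theorem stmt19_general {s m : ℕ}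
    (p : Fin s → Fin m → ℝ) (hp0 : ∀ i j, 0 < p i j) :
    (∃ H : Fin s → Matrix (Fin m) (Fin m) ℂ,
        (∀ i, ∃ U ∈ Matrix.unitaryGroup (Fin m) ℂ,
          H i = U * Matrix.diagonal (fun j => (p i j : ℂ)) * Uᴴ) ∧
        ∑ i, H i = 1)
    ↔
    (∀ ε : ℝ, 0 < ε →
      ∃ (g : Matrix (Fin m) (Fin m) ℂ) (h : Fin s → Matrix (Fin m) (Fin m) ℂ),
        IsUnit g.det ∧ (∀ i, IsUnit (h i).det) ∧
        frob (gᴴ * cpMap (hornKraus s m) (blockDiag h * (blockDiag h)ᴴ) * g - 1) ≤ ε ∧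
        frob ((blockDiag h)ᴴ * cpDual (hornKraus s m) (g * gᴴ) * blockDiag h -
          Matrix.diagonal (fun jb : Fin s × Fin m => (p jb.1 jb.2 : ℂ))) ≤ ε) := by
  simp only [conjTranspose_mul_cpMap_hornKraus_mul,
    conjTranspose_blockDiag_mul_cpDual_hornKraus_mul, diagonal_eq_blockDiag fun i j => (p i j : ℂ),
    blockDiag_sub_blockDiag]
  set D : Fin s → Matrix (Fin m) (Fin m) ℂ := fun i => diagonal fun j => (p i j : ℂ)
  constructor
  · rintro ⟨H, hH, hsum⟩ ε hε
    choose X hXunit hXH hXD using fun i =>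
      (hH i).elim fun U ⟨hU, hHU⟩ => hHU ▸ exists_isUnit_det_mul_conjTranspose_eq hU (hp0 i)
    refine ⟨1, X, by simp, hXunit, ?_⟩
    simp only [conjTranspose_one, one_mul, hXH, hsum, sub_self]
    exact ⟨(frob_eq_zero.2 rfl).trans_le hε.le,
      (frob_eq_zero.2 (blockDiag_eq_zero_iff.2 fun i => sub_eq_zero.2 (hXD i))).trans_le hε.le⟩
  · intro happrox
    obtain ⟨X, hX⟩ := exists_scalingDefect_eq_zero D fun ε hε => by
      obtain ⟨g, h, -, -, h1, h2⟩ := happrox (ε / 2) (half_pos hε)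
      exact ⟨fun i => gᴴ * h i, (add_le_add h1 h2).trans_eq (add_halves ε)⟩
    obtain ⟨hsum, hXD⟩ := (scalingDefect_eq_zero_iff D).1 hX
    refine ⟨fun i => X i * (X i)ᴴ, fun i => ?_, hsum⟩
    exact exists_unitary_mul_conjTranspose_eq
      (isHermitian_diagonal_of_self_adjoint _ (by ext; simp)) (X i) (hXD i)

/-- Theorem: there exist PSD Hermitian `H_1,…,H_s` with spectra `p(1),…,p(s)` summing to `I_m`
iff `T_m^s` is approximately scalable to `(I_{ms} → I_m, I_m → ⊕ diag p(i))` by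
`GL_m × (⊕ GL_m)`. -/
theorem stmt19 {s m : ℕ} (hs : 0 < s) (hm : 0 < m)
    (p : Fin s → Fin m → ℝ) (hpa : ∀ i, Antitone (p i)) (hp0 : ∀ i j, 0 < p i j) :
    (∃ H : Fin s → Matrix (Fin m) (Fin m) ℂ,
        (∀ i, ∃ U ∈ Matrix.unitaryGroup (Fin m) ℂ,
          H i = U * Matrix.diagonal (fun j => (p i j : ℂ)) * Uᴴ) ∧
        ∑ i, H i = 1)
    ↔
    (∀ ε : ℝ, 0 < ε →
      ∃ (g : Matrix (Fin m) (Fin m) ℂ) (h : Fin s → Matrix (Fin m) (Fin m) ℂ),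
        IsUnit g.det ∧ (∀ i, IsUnit (h i).det) ∧
        frob (gᴴ * cpMap (hornKraus s m) (blockDiag h * (blockDiag h)ᴴ) * g - 1) ≤ ε ∧
        frob ((blockDiag h)ᴴ * cpDual (hornKraus s m) (g * gᴴ) * blockDiag h -
          Matrix.diagonal (fun jb : Fin s × Fin m => (p jb.1 jb.2 : ℂ))) ≤ ε) :=
  stmt19_general p hp0
end
end
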